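/- arXiv:1611.03442 — 3 statements merged into one kernel-verified Lean document; each statement's English description precedes it below -/
import Mathlib

section
/- Let W be a finite real reflection group on V and let u, v ∈ W with uv = vu and ℓ_T(uv) = ℓ_T(u) + ℓ_T(v). Then Mov(v) ⊆ V^u, i.e., every vector in the moved space of v is fixed by u. -/
/-- The minimal length of an expression of `w` as a product of elements of `T`. -/
noncomputable def wordLength {G : Type*} [Group G] (T : Set G) (w : G) : ℕ :=
  sInf {n | ∃ l : List G, (∀ t ∈ l, t ∈ T) ∧ l.length = n ∧ l.prod = w}

variable {V : Type*} [NormedAddCommGroup V] [InnerProductSpace ℝ V] [FiniteDimensional ℝ V]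

/-- The fixed space `V^f` of a linear isometry. -/
noncomputable def fixedSpace (f : V ≃ₗᵢ[ℝ] V) : Submodule ℝ V :=
  LinearMap.ker (f.toLinearEquiv.toLinearMap - LinearMap.id)

/-- The moved space `Mov(f) = im (f - 1)` of a linear isometry. -/
noncomputable def movedSpace (f : V ≃ₗᵢ[ℝ] V) : Submodule ℝ V :=
  LinearMap.range (f.toLinearEquiv.toLinearMap - LinearMap.id)

/-- `f` is an (orthogonal, hyperplane) reflection: the orthogonal reflection in the
hyperplane orthogonal to some nonzero vector `α` (a root of `f`). -/
noncomputable def IsHypReflection (f : V ≃ₗᵢ[ℝ] V) : Prop :=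
  ∃ α : V, α ≠ 0 ∧ f = Submodule.reflection (ℝ ∙ α)ᗮ

/-!
By Carter's lemma `ℓ_T(w) = dim Mov(w)` for all `w ∈ W`. As `Mov(uv) ⊆ Mov(u) + Mov(v)`, the
additivity `ℓ_T(uv) = ℓ_T(u) + ℓ_T(v)` forces `Mov(u) ∩ Mov(v) = 0`; for `z ∈ Mov(v)`,
commutativity puts `uz - z` in both `Mov(u)` and `Mov(v)`, hence `uz = z`.

In Carter's lemma, `dim Mov(w) ≤ ℓ_T(w)` is subadditivity of `dim Mov`. Conversely, for `w ≠ 1`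
it suffices to find a reflection `s_α ∈ W` with `α ∈ Mov(w) = Fix(w)ᗮ`, as `s_α w` has a larger
fixed space. Otherwise `Fix(w)` contains a vector `x` orthogonal to no root, and `w ≠ 1` fixes
`x`. This is ruled out by the simple-system argument: take a minimal set `Δ` of roots positive
on `x` that spans all positive roots as a cone; the `s_δ`, `δ ∈ Δ`, permute the other positive
roots and generate `W`, and the exchange argument shortens every word in them that fixes `x`.
-/

open Module Submodule
open scoped RealInnerProductSpace

section WordLength

variable {G : Type*} [Group G] {T : Set G}

lemma wordLength_list_prod_le {l : List G} (hl : ∀ t ∈ l, t ∈ T) :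
    wordLength T l.prod ≤ l.length :=
  Nat.sInf_le ⟨l, hl, rfl, rfl⟩

lemma exists_list_length_eq_wordLength (hT : ∀ t ∈ T, t⁻¹ ∈ T) (hgen : Subgroup.closure T = ⊤)
    (g : G) : ∃ l : List G, (∀ t ∈ l, t ∈ T) ∧ l.length = wordLength T g ∧ l.prod = g := by
  have hTinv : T ∪ T⁻¹ = T := Set.union_eq_left.2 fun t ht => inv_inv t ▸ hT _ ht
  have hg : g ∈ Submonoid.closure T := by
    rw [← hTinv, ← Subgroup.closure_toSubmonoid, hgen]
    trivial
  obtain ⟨l, hl, hprod⟩ := Submonoid.exists_list_of_mem_closure hg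
  have hne : {n | ∃ l : List G, (∀ t ∈ l, t ∈ T) ∧ l.length = n ∧ l.prod = g}.Nonempty :=
    ⟨l.length, l, hl, rfl, hprod⟩
  exact Nat.sInf_mem hne

end WordLength

namespace ReflectionGroup

omit [FiniteDimensional ℝ V]

section Isometry

variable {f g : V ≃ₗᵢ[ℝ] V}

lemma mem_fixedSpace_iff {x : V} : x ∈ fixedSpace f ↔ f x = x := by
  simp [fixedSpace, sub_eq_zero]

lemma mem_movedSpace_iff {z : V} : z ∈ movedSpace f ↔ ∃ y, f y - y = z := by
  simp [movedSpace]

lemma sub_mem_movedSpace (f : V ≃ₗᵢ[ℝ] V) (y : V) : f y - y ∈ movedSpace f :=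
  mem_movedSpace_iff.2 ⟨y, rfl⟩

lemma finrank_movedSpace_add_finrank_fixedSpace [FiniteDimensional ℝ V] (f : V ≃ₗᵢ[ℝ] V) :
    finrank ℝ (movedSpace f) + finrank ℝ (fixedSpace f) = finrank ℝ V :=
  LinearMap.finrank_range_add_finrank_ker _

lemma movedSpace_eq_orthogonal [FiniteDimensional ℝ V] (f : V ≃ₗᵢ[ℝ] V) :
    movedSpace f = (fixedSpace f)ᗮ := by
  refine eq_of_le_of_finrank_eq ?_ ?_
  · rintro _ ⟨y, rfl⟩ x hx
    have hx : f x = x := mem_fixedSpace_iff.1 hx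
    simp only [LinearMap.sub_apply, LinearMap.id_apply, LinearEquiv.coe_coe,
      LinearIsometryEquiv.coe_toLinearEquiv, inner_sub_right]
    rw [← f.inner_map_map x y, hx, sub_self]
  · have := finrank_add_finrank_orthogonal (fixedSpace f)
    have := finrank_movedSpace_add_finrank_fixedSpace f
    omega

lemma movedSpace_mul_le (f g : V ≃ₗᵢ[ℝ] V) :
    movedSpace (f * g) ≤ movedSpace f ⊔ movedSpace g := by
  rintro _ ⟨y, rfl⟩
  have : (f * g) y - y = (f (g y) - g y) + (g y - y) := by
    rw [LinearIsometryEquiv.coe_mul, Function.comp_apply]; abel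
  simp only [LinearMap.sub_apply, LinearMap.id_apply, LinearEquiv.coe_coe,
    LinearIsometryEquiv.coe_toLinearEquiv, this]
  exact add_mem_sup (sub_mem_movedSpace f (g y)) (sub_mem_movedSpace g y)

lemma movedSpace_inf_eq_bot_of_finrank_add_le [FiniteDimensional ℝ V]
    (h : finrank ℝ (movedSpace f) + finrank ℝ (movedSpace g) ≤ finrank ℝ (movedSpace (f * g))) :
    movedSpace f ⊓ movedSpace g = ⊥ := by
  have hsup := finrank_mono (movedSpace_mul_le f g)
  have := finrank_sup_add_finrank_inf_eq (movedSpace f) (movedSpace g)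
  exact finrank_eq_zero.1 (by omega)

lemma movedSpace_le_fixedSpace_of_commute (hfg : Commute f g)
    (h : movedSpace f ⊓ movedSpace g = ⊥) : movedSpace g ≤ fixedSpace f := by
  intro z hz
  obtain ⟨y, rfl⟩ := mem_movedSpace_iff.1 hz
  have hfz : f (g y - y) ∈ movedSpace g := by
    rw [map_sub, ← Function.comp_apply (f := f), ← LinearIsometryEquiv.coe_mul, hfg.eq,
      LinearIsometryEquiv.coe_mul, Function.comp_apply]
    exact sub_mem_movedSpace g (f y)
  have hmem : f (g y - y) - (g y - y) ∈ movedSpace f ⊓ movedSpace g :=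
    ⟨sub_mem_movedSpace f _, sub_mem hfz hz⟩
  rw [h, mem_bot, sub_eq_zero] at hmem
  exact mem_fixedSpace_iff.2 hmem

end Isometry

section Reflection

noncomputable abbrev hypReflection (α : V) : V ≃ₗᵢ[ℝ] V := reflection (ℝ ∙ α)ᗮ

variable {α : V}

lemma hypReflection_apply (hα : ‖α‖ = 1) (y : V) :
    hypReflection α y = y - (2 * ⟪α, y⟫) • α := by
  rw [reflection_orthogonal_apply, reflection_singleton_apply, hα]
  simp only [RCLike.ofReal_real_eq_id, id_eq, one_pow, div_one, two_smul]
  module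

lemma hypReflection_apply_self (α : V) : hypReflection α α = -α :=
  reflection_orthogonalComplement_singleton_eq_neg α

lemma hypReflection_apply_of_inner_eq_zero {y : V} (h : ⟪α, y⟫ = 0) : hypReflection α y = y :=
  reflection_mem_subspace_eq_self (mem_orthogonal_singleton_iff_inner_right.2 h)

lemma hypReflection_hypReflection (α y : V) : hypReflection α (hypReflection α y) = y :=
  reflection_reflection _ y

lemma hypReflection_mul_self (α : V) : hypReflection α * hypReflection α = 1 :=
  reflection_mul_reflection _

lemma hypReflection_inv (α : V) : (hypReflection α)⁻¹ = hypReflection α :=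
  reflection_inv

lemma isHypReflection_inv {f : V ≃ₗᵢ[ℝ] V} (hf : IsHypReflection f) : IsHypReflection f⁻¹ := by
  obtain ⟨α, hα, rfl⟩ := hf
  exact ⟨α, hα, hypReflection_inv α⟩

lemma hypReflection_smul {c : ℝ} (hc : c ≠ 0) (α : V) :
    hypReflection (c • α) = hypReflection α := by
  simp only [hypReflection, span_singleton_smul_eq (isUnit_iff_ne_zero.2 hc)]

lemma hypReflection_neg (α : V) : hypReflection (-α) = hypReflection α := by
  simpa using hypReflection_smul (neg_ne_zero.2 one_ne_zero) α

lemma mul_hypReflection_mul_inv (g : V ≃ₗᵢ[ℝ] V) (α : V) :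
    g * hypReflection α * g⁻¹ = hypReflection (g α) := by
  have hmap : (ℝ ∙ g α)ᗮ = ((ℝ ∙ α)ᗮ).map (g.toLinearEquiv : V →ₗ[ℝ] V) := by
    rw [map_orthogonal_equiv, map_span, Set.image_singleton]
    rfl
  ext y
  simp only [hypReflection, hmap, reflection_map_apply, LinearIsometryEquiv.coe_mul,
    LinearIsometryEquiv.coe_inv, Function.comp_apply]

lemma fixedSpace_hypReflection (α : V) : fixedSpace (hypReflection α) = (ℝ ∙ α)ᗮ := by
  ext y
  exact mem_fixedSpace_iff.trans (reflection_eq_self_iff y)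

lemma movedSpace_hypReflection [FiniteDimensional ℝ V] (α : V) :
    movedSpace (hypReflection α) = ℝ ∙ α := by
  rw [movedSpace_eq_orthogonal, fixedSpace_hypReflection, orthogonal_orthogonal]

lemma eq_or_eq_neg_of_hypReflection_eq {β : V} (hα : ‖α‖ = 1) (hβ : ‖β‖ = 1)
    (h : hypReflection α = hypReflection β) : β = α ∨ β = -α := by
  have hspan : ℝ ∙ α = ℝ ∙ β := by
    simpa only [fixedSpace_hypReflection, orthogonal_orthogonal]
      using congrArg (fun f => (fixedSpace f)ᗮ) h
  obtain ⟨c, rfl⟩ := span_singleton_eq_span_singleton.1 hspan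
  have hc : |(c : ℝ)| = 1 := by simpa [Units.smul_def, norm_smul, hα] using hβ
  rcases abs_eq zero_le_one |>.1 hc with hc | hc <;> simp [Units.smul_def, hc]

end Reflection

section MovedSpace

variable [FiniteDimensional ℝ V]

lemma finrank_movedSpace_list_prod_le (l : List (V ≃ₗᵢ[ℝ] V)) (hl : ∀ f ∈ l, IsHypReflection f) :
    finrank ℝ (movedSpace l.prod) ≤ l.length := by
  induction l with
  | nil =>
    rw [List.prod_nil, List.length_nil, Nat.le_zero, finrank_eq_zero, eq_bot_iff]
    rintro _ ⟨y, rfl⟩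
    simp
  | cons f l ih =>
    obtain ⟨α, hα, rfl⟩ := hl f List.mem_cons_self
    have hf : finrank ℝ (movedSpace (hypReflection α)) = 1 := by
      rw [movedSpace_hypReflection, finrank_span_singleton hα]
    calc finrank ℝ (movedSpace (hypReflection α * l.prod))
        ≤ finrank ℝ ↥(movedSpace (hypReflection α) ⊔ movedSpace l.prod) :=
          finrank_mono (movedSpace_mul_le _ _)
      _ ≤ 1 + l.length := by
          grw [finrank_add_le_finrank_add_finrank, hf,
            ih fun g hg => hl g (List.mem_cons_of_mem _ hg)]
      _ = (hypReflection α :: l).length := by simp [add_comm]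

lemma finrank_movedSpace_hypReflection_mul_lt {w : V ≃ₗᵢ[ℝ] V} {α : V} (hα : α ≠ 0)
    (h : α ∈ movedSpace w) :
    finrank ℝ (movedSpace (hypReflection α * w)) < finrank ℝ (movedSpace w) := by
  obtain ⟨y, hy⟩ := mem_movedSpace_iff.1 h
  have hlt : fixedSpace w < fixedSpace (hypReflection α * w) := by
    refine SetLike.lt_iff_le_and_exists.2 ⟨fun z hz => ?_, y, ?_, ?_⟩
    · have hαz : ⟪α, z⟫ = 0 := by
        rw [movedSpace_eq_orthogonal] at h
        exact inner_eq_zero_symm.1 (h z hz)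
      rw [mem_fixedSpace_iff, LinearIsometryEquiv.coe_mul, Function.comp_apply,
        mem_fixedSpace_iff.1 hz, hypReflection_apply_of_inner_eq_zero hαz]
    · rw [mem_fixedSpace_iff, LinearIsometryEquiv.coe_mul, Function.comp_apply, ← hy]
      exact reflection_sub (w.norm_map y)
    · rw [mem_fixedSpace_iff]
      rintro hwy
      exact hα (by rw [← hy, hwy, sub_self])
  have := finrank_lt_finrank_of_lt hlt
  have := finrank_movedSpace_add_finrank_fixedSpace w
  have := finrank_movedSpace_add_finrank_fixedSpace (hypReflection α * w)
  omega

end MovedSpace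

section Cone

variable {S : Set V} {x γ : V}

lemma inner_nonneg_of_mem_hull (hS : ∀ v ∈ S, 0 ≤ ⟪v, x⟫) (hγ : γ ∈ PointedCone.hull ℝ S) :
    0 ≤ ⟪γ, x⟫ := by
  induction hγ using span_induction with
  | mem v hv => exact hS v hv
  | zero => simp
  | add a b _ _ ha hb => rw [inner_add_left]; positivity
  | smul c a _ ha => exact (real_inner_smul_left a x c).symm ▸ mul_nonneg c.2 ha

lemma eq_zero_or_inner_pos_of_mem_hull (hS : ∀ v ∈ S, 0 < ⟪v, x⟫)
    (hγ : γ ∈ PointedCone.hull ℝ S) : γ = 0 ∨ 0 < ⟪γ, x⟫ := by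
  induction hγ using span_induction with
  | mem v hv => exact .inr (hS v hv)
  | zero => exact .inl rfl
  | add a b _ _ ha hb =>
    rcases ha with rfl | ha
    · simpa using hb
    rcases hb with rfl | hb
    · simpa using Or.inr ha
    exact .inr (by rw [inner_add_left]; positivity)
  | smul c a _ ha =>
    rcases ha with rfl | ha
    · simp
    rcases c.2.eq_or_lt with hc | hc
    · left
      change (c : ℝ) • a = 0
      rw [← hc, zero_smul]
    · exact .inr ((real_inner_smul_left a x c).symm ▸ mul_pos hc ha)

lemma exists_inner_pos_of_mem_hull (hγ : γ ∈ PointedCone.hull ℝ S) (hγ0 : γ ≠ 0) :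
    ∃ v ∈ S, 0 < ⟪v, γ⟫ := by
  by_contra! h
  have := inner_nonneg_of_mem_hull (x := -γ) (fun v hv => by simpa using h v hv) hγ
  rw [inner_neg_right, neg_nonneg, real_inner_self_nonpos] at this
  exact hγ0 this

lemma exists_smul_add_of_mem_hull {δ : V} (hδ : δ ∈ S) (hγ : γ ∈ PointedCone.hull ℝ S) :
    ∃ c : ℝ, 0 ≤ c ∧ ∃ γ' ∈ PointedCone.hull ℝ (S \ {δ}), γ = c • δ + γ' := by
  rw [← Set.insert_eq_of_mem hδ, ← Set.insert_sdiff_singleton, PointedCone.hull,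
    mem_span_insert] at hγ
  obtain ⟨c, γ', hγ', rfl⟩ := hγ
  exact ⟨c, c.2, γ', hγ', rfl⟩

end Cone

lemma exists_mem_forall_inner_ne_zero {S : Set V} (hS : S.Finite) (F : Submodule ℝ V)
    (h : ∀ α ∈ S, ¬ F ≤ (ℝ ∙ α)ᗮ) : ∃ x ∈ F, ∀ α ∈ S, ⟪α, x⟫ ≠ 0 := by
  have := hS.to_subtype
  by_contra! hcover
  obtain ⟨⟨α, hα⟩, htop⟩ := Subspace.exists_eq_top_of_iUnion_eq_univ
    (p := fun α : S => ((ℝ ∙ (α : V))ᗮ).comap F.subtype) <| Set.eq_univ_of_forall fun y => by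
      obtain ⟨α, hα, hαy⟩ := hcover y y.2
      exact Set.mem_iUnion.2 ⟨⟨α, hα⟩, mem_orthogonal_singleton_iff_inner_right.2 hαy⟩
  refine h α hα fun y hy => ?_
  have hmem : (⟨y, hy⟩ : F) ∈ ((ℝ ∙ α)ᗮ).comap F.subtype := htop ▸ mem_top
  exact hmem

section Roots

variable (W : Subgroup (V ≃ₗᵢ[ℝ] V))

/-- Roots are normalised to unit length, so each reflection of `W` has exactly two roots `±α`. -/
def roots : Set V := {α | ‖α‖ = 1 ∧ hypReflection α ∈ W}

abbrev reflections : Set W := {x : W | IsHypReflection (x : V ≃ₗᵢ[ℝ] V)}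

variable {W} {α : V}

lemma ne_zero_of_mem_roots (h : α ∈ roots W) : α ≠ 0 := by
  rintro rfl
  simpa using h.1

lemma neg_mem_roots (h : α ∈ roots W) : -α ∈ roots W :=
  ⟨by rw [norm_neg, h.1], by rw [hypReflection_neg]; exact h.2⟩

lemma apply_mem_roots {g : V ≃ₗᵢ[ℝ] V} (hg : g ∈ W) (h : α ∈ roots W) : g α ∈ roots W :=
  ⟨by rw [g.norm_map, h.1], mul_hypReflection_mul_inv g α ▸ mul_mem (mul_mem hg h.2) (inv_mem hg)⟩

lemma list_prod_mem {l : List V} (hl : ∀ α ∈ l, α ∈ roots W) :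
    (l.map hypReflection).prod ∈ W :=
  W.list_prod_mem (by simpa using fun α hα => (hl α hα).2)

lemma roots_finite [Finite W] : (roots W).Finite := by
  refine ((Set.toFinite (W : Set (V ≃ₗᵢ[ℝ] V))).biUnion
    (t := fun t => {α : V | ‖α‖ = 1 ∧ hypReflection α = t}) fun t _ => ?_).subset
    fun α hα => Set.mem_biUnion hα.2 ⟨hα.1, rfl⟩
  rcases Set.eq_empty_or_nonempty {α : V | ‖α‖ = 1 ∧ hypReflection α = t} with he | ⟨a, ha, rfl⟩
  · exact he ▸ Set.finite_empty
  · refine (Set.toFinite {a, -a}).subset fun β ⟨hβ, h⟩ => ?_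
    simpa using eq_or_eq_neg_of_hypReflection_eq ha hβ h.symm

lemma exists_mem_roots_eq_hypReflection {t : V ≃ₗᵢ[ℝ] V} (hW : t ∈ W) (ht : IsHypReflection t) :
    ∃ α ∈ roots W, t = hypReflection α := by
  obtain ⟨α, hα, rfl⟩ := ht
  have hnorm : ‖α‖ ≠ 0 := norm_ne_zero_iff.2 hα
  refine ⟨‖α‖⁻¹ • α, ⟨?_, ?_⟩, ?_⟩
  · rw [norm_smul, norm_inv, norm_norm, inv_mul_cancel₀ hnorm]
  · rwa [hypReflection_smul (inv_ne_zero hnorm)]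
  · rw [hypReflection_smul (inv_ne_zero hnorm)]

lemma le_closure_hypReflection_roots (hgen : Subgroup.closure (reflections W) = ⊤) :
    W ≤ Subgroup.closure (hypReflection '' roots W) := by
  have hW : W = Subgroup.closure (W.subtype '' reflections W) := by
    rw [← MonoidHom.map_closure, hgen, ← MonoidHom.range_eq_map, Subgroup.range_subtype]
  refine hW.trans_le ((Subgroup.closure_le _).2 ?_)
  rintro _ ⟨t, ht, rfl⟩
  obtain ⟨α, hα, hα'⟩ := exists_mem_roots_eq_hypReflection t.2 ht
  exact Subgroup.subset_closure ⟨α, hα, hα'.symm⟩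

lemma exists_list_of_mem_closure_hypReflection {S : Set V} {g : V ≃ₗᵢ[ℝ] V}
    (hg : g ∈ Subgroup.closure (hypReflection '' S)) :
    ∃ l : List V, (∀ α ∈ l, α ∈ S) ∧ (l.map hypReflection).prod = g := by
  induction hg using Subgroup.closure_induction with
  | mem _ h =>
    obtain ⟨α, hα, rfl⟩ := h
    exact ⟨[α], by simpa using hα, by simp⟩
  | one => exact ⟨[], by simp, by simp⟩
  | mul _ _ _ _ ih₁ ih₂ =>
    obtain ⟨l₁, hl₁, rfl⟩ := ih₁
    obtain ⟨l₂, hl₂, rfl⟩ := ih₂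
    exact ⟨l₁ ++ l₂, fun α hα => (List.mem_append.1 hα).elim (hl₁ α) (hl₂ α), by simp⟩
  | inv _ _ ih =>
    obtain ⟨l, hl, rfl⟩ := ih
    refine ⟨l.reverse, fun α hα => hl α (List.mem_reverse.1 hα), ?_⟩
    simp [List.prod_inv_reverse, List.map_reverse, Function.comp_def]

end Roots

section SimpleSystem

variable (W : Subgroup (V ≃ₗᵢ[ℝ] V)) (x : V)

def posRoots : Set V := {α | α ∈ roots W ∧ 0 < ⟪α, x⟫}

structure IsSimpleSystem (Δ : Set V) : Prop where
  subset_posRoots : Δ ⊆ posRoots W x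
  posRoots_subset_hull : posRoots W x ⊆ PointedCone.hull ℝ Δ
  notMem_hull_sdiff : ∀ δ ∈ Δ, δ ∉ PointedCone.hull ℝ (Δ \ {δ})

variable {W x}

lemma posRoots_finite [Finite W] : (posRoots W x).Finite :=
  roots_finite.subset fun _ h => h.1

lemma mem_posRoots_or_neg_mem_posRoots (hreg : ∀ α ∈ roots W, ⟪α, x⟫ ≠ 0) {α : V}
    (hα : α ∈ roots W) : α ∈ posRoots W x ∨ -α ∈ posRoots W x := by
  rcases (hreg α hα).lt_or_gt with h | h
  · exact .inr ⟨neg_mem_roots hα, by rw [inner_neg_left]; linarith⟩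
  · exact .inl ⟨hα, h⟩

lemma exists_isSimpleSystem [Finite W] : ∃ Δ, IsSimpleSystem W x Δ := by
  set C := {Δ : Set V | Δ ⊆ posRoots W x ∧ posRoots W x ⊆ PointedCone.hull ℝ Δ}
  have hC : C.Finite := posRoots_finite.finite_subsets.subset fun _ h => h.1
  obtain ⟨Δ, hmin⟩ := hC.exists_minimal ⟨posRoots W x, subset_rfl, subset_span⟩
  refine ⟨Δ, hmin.prop.1, hmin.prop.2, fun δ hδ hmem => ?_⟩
  have hdiff : Δ \ {δ} ∈ C := by
    refine ⟨Set.sdiff_subset.trans hmin.prop.1, hmin.prop.2.trans (span_le.2 fun v hv => ?_)⟩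
    rcases eq_or_ne v δ with rfl | hne
    · exact hmem
    · exact subset_span ⟨hv, hne⟩
  have := hmin.eq_of_le hdiff Set.sdiff_subset
  exact (this ▸ Set.notMem_sdiff_of_mem rfl : δ ∉ Δ) hδ

namespace IsSimpleSystem

variable {Δ : Set V} (hΔ : IsSimpleSystem W x Δ)
include hΔ

lemma mem_roots {δ : V} (hδ : δ ∈ Δ) : δ ∈ roots W := (hΔ.subset_posRoots hδ).1

lemma inner_pos {δ : V} (hδ : δ ∈ Δ) : 0 < ⟪δ, x⟫ := (hΔ.subset_posRoots hδ).2

lemma sub_smul_notMem_hull {α β : V} (hα : α ∈ Δ) (hβ : β ∈ Δ) (hne : α ≠ β) {k : ℝ}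
    (hk : 0 < k) : β - k • α ∉ PointedCone.hull ℝ Δ := by
  intro hmem
  obtain ⟨c, -, γ, hγ, hdecomp⟩ := exists_smul_add_of_mem_hull hβ hmem
  have hη : k • α + γ ∈ PointedCone.hull ℝ (Δ \ {β}) :=
    add_mem (PointedCone.smul_mem _ hk.le (subset_span ⟨hα, hne⟩)) hγ
  have heq : (1 - c) • β = k • α + γ := by linear_combination (norm := module) hdecomp
  have hpos : 0 < ⟪k • α + γ, x⟫ := by
    have := inner_nonneg_of_mem_hull (fun v hv => (hΔ.inner_pos hv.1).le) hγ
    have := hΔ.inner_pos hα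
    rw [inner_add_left, real_inner_smul_left]
    positivity
  have hc : 0 < 1 - c := by
    rw [← heq, real_inner_smul_left] at hpos
    exact pos_of_mul_pos_left hpos (hΔ.inner_pos hβ).le
  refine hΔ.notMem_hull_sdiff β hβ ?_
  rwa [← PointedCone.smul_mem_iff _ hc, heq]

variable (hreg : ∀ α ∈ roots W, ⟪α, x⟫ ≠ 0)
include hreg

lemma inner_nonpos {α β : V} (hα : α ∈ Δ) (hβ : β ∈ Δ) (hne : α ≠ β) : ⟪α, β⟫ ≤ 0 := by
  by_contra! hpos
  set k := 2 * ⟪α, β⟫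
  have hk : 0 < k := by positivity
  have hroot : β - k • α ∈ roots W := by
    rw [← hypReflection_apply (hΔ.mem_roots hα).1]
    exact apply_mem_roots (hΔ.mem_roots hα).2 (hΔ.mem_roots hβ)
  rcases mem_posRoots_or_neg_mem_posRoots hreg hroot with h | h
  · exact hΔ.sub_smul_notMem_hull hα hβ hne hk (hΔ.posRoots_subset_hull h)
  · refine hΔ.sub_smul_notMem_hull hβ hα hne.symm (inv_pos.2 hk) ?_
    have := PointedCone.smul_mem _ (inv_pos.2 hk).le (hΔ.posRoots_subset_hull h)
    convert this using 1
    rw [smul_neg, smul_sub, smul_smul, inv_mul_cancel₀ hk.ne', one_smul, neg_sub]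

lemma hypReflection_mem_posRoots {δ β : V} (hδ : δ ∈ Δ) (hβ : β ∈ posRoots W x) (hne : β ≠ δ) :
    hypReflection δ β ∈ posRoots W x := by
  have hroot := apply_mem_roots (hΔ.mem_roots hδ).2 hβ.1
  refine (mem_posRoots_or_neg_mem_posRoots hreg hroot).resolve_right fun hneg => ?_
  set k := 2 * ⟪δ, β⟫
  rw [hypReflection_apply (hΔ.mem_roots hδ).1] at hneg
  -- Split off the `δ`-components of `β` and of `-s_δ β = k • δ - β`: the remainders add up to a
  -- multiple of `δ` which is positive on `x` but, by obtuseness, nonpositive on `δ`.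
  obtain ⟨a, ha, β', hβ', hβeq⟩ := exists_smul_add_of_mem_hull hδ (hΔ.posRoots_subset_hull hβ)
  obtain ⟨b, -, γ', hγ', hγeq⟩ := exists_smul_add_of_mem_hull hδ (hΔ.posRoots_subset_hull hneg)
  have hsum : β' + γ' = (k - a - b) • δ := by
    linear_combination (norm := module) -hβeq - hγeq
  have hβ'0 : β' ≠ 0 := by
    rintro rfl
    have ha1 : a = 1 := by
      simpa [hβeq, norm_smul, abs_of_nonneg ha, (hΔ.mem_roots hδ).1] using hβ.1.1
    exact hne (by simpa [ha1] using hβeq)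
  have hnonneg : ∀ v ∈ Δ \ {δ}, 0 ≤ ⟪v, x⟫ := fun v hv => (hΔ.inner_pos hv.1).le
  have hkab : 0 < k - a - b := by
    have h₁ := (eq_zero_or_inner_pos_of_mem_hull (fun v hv => hΔ.inner_pos hv.1) hβ').resolve_left
      hβ'0
    have h₂ := inner_nonneg_of_mem_hull hnonneg hγ'
    have h₃ : 0 < ⟪(k - a - b) • δ, x⟫ := by rw [← hsum, inner_add_left]; linarith
    rw [real_inner_smul_left] at h₃
    exact pos_of_mul_pos_left h₃ (hΔ.inner_pos hδ).le
  have hobtuse : ∀ v ∈ Δ \ {δ}, 0 ≤ ⟪v, -δ⟫ := fun v hv => by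
    rw [inner_neg_right, neg_nonneg]
    exact hΔ.inner_nonpos hreg hv.1 hδ hv.2
  have h₁ := inner_nonneg_of_mem_hull hobtuse (add_mem hβ' hγ')
  rw [hsum, inner_neg_right, real_inner_smul_left, real_inner_self_eq_norm_sq,
    (hΔ.mem_roots hδ).1] at h₁
  linarith

lemma hypReflection_mem_closure [Finite W] {α : V} (hα : α ∈ roots W) :
    hypReflection α ∈ Subgroup.closure (hypReflection '' Δ) := by
  set H := Subgroup.closure (hypReflection '' Δ)
  have hsimple {v : V} (hv : v ∈ Δ) : hypReflection v ∈ H := Subgroup.subset_closure ⟨v, hv, rfl⟩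
  suffices h : ∀ α ∈ posRoots W x, hypReflection α ∈ H by
    rcases mem_posRoots_or_neg_mem_posRoots hreg hα with hp | hn
    · exact h α hp
    · simpa [hypReflection_neg] using h _ hn
  -- Induction on the height `⟪α, x⟫`: some simple reflection lowers a non-simple positive root.
  by_contra! hbad
  obtain ⟨α, ⟨hαP, hα⟩, hmin⟩ :=
    Set.exists_min_image {α | α ∈ posRoots W x ∧ hypReflection α ∉ H} (fun α => ⟪α, x⟫)
      (posRoots_finite.subset fun _ h => h.1) (let ⟨α, h₁, h₂⟩ := hbad; ⟨α, h₁, h₂⟩)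
  obtain ⟨v, hv, hvα⟩ :=
    exists_inner_pos_of_mem_hull (hΔ.posRoots_subset_hull hαP) (ne_zero_of_mem_roots hαP.1)
  have hne : α ≠ v := by rintro rfl; exact hα (hsimple hv)
  have hlt : ⟪hypReflection v α, x⟫ < ⟪α, x⟫ := by
    rw [hypReflection_apply (hΔ.mem_roots hv).1, inner_sub_left, real_inner_smul_left]
    nlinarith [hΔ.inner_pos hv]
  have hmem : hypReflection (hypReflection v α) ∈ H := by
    by_contra h
    exact (hmin _ ⟨hΔ.hypReflection_mem_posRoots hreg hv hαP hne, h⟩).not_gt hlt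
  apply hα
  rw [← hypReflection_hypReflection v α, ← mul_hypReflection_mul_inv]
  exact mul_mem (mul_mem (hsimple hv) hmem) (inv_mem (hsimple hv))

lemma exists_eq_append_cons_of_inner_neg {m : List V} (hm : ∀ δ ∈ m, δ ∈ Δ) {θ : V}
    (hθ : θ ∈ posRoots W x) (h : ⟪(m.map hypReflection).prod θ, x⟫ < 0) :
    ∃ m₁ δ m₂, m = m₁ ++ δ :: m₂ ∧ (m₂.map hypReflection).prod θ = δ := by
  induction m with
  | nil => simp at h; linarith [hθ.2]
  | cons a m ih =>
    have hm' : ∀ δ ∈ m, δ ∈ Δ := fun δ hδ => hm δ (List.mem_cons_of_mem _ hδ)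
    set ψ := (m.map hypReflection).prod θ
    rcases lt_or_ge ⟪ψ, x⟫ 0 with hneg | hnonneg
    · obtain ⟨m₁, δ, m₂, rfl, hδ⟩ := ih hm' hneg
      exact ⟨a :: m₁, δ, m₂, rfl, hδ⟩
    have hψ : ψ ∈ posRoots W x := by
      have hroot : ψ ∈ roots W :=
        apply_mem_roots (list_prod_mem fun δ hδ => hΔ.mem_roots (hm' δ hδ)) hθ.1
      exact ⟨hroot, hnonneg.lt_of_ne' (hreg ψ hroot)⟩
    by_cases hψa : ψ = a
    · exact ⟨[], a, m, rfl, hψa⟩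
    have := (hΔ.hypReflection_mem_posRoots hreg (hm a List.mem_cons_self) hψ hψa).2
    simp only [List.map_cons, List.prod_cons, LinearIsometryEquiv.coe_mul, Function.comp_apply] at h
    linarith

lemma list_prod_eq_one_of_apply_eq_self (l : List V) (hl : ∀ δ ∈ l, δ ∈ Δ)
    (hx : (l.map hypReflection).prod x = x) : (l.map hypReflection).prod = 1 := by
  induction h : l.length using Nat.strong_induction_on generalizing l with
  | _ n ih =>
  induction l using List.reverseRecOn with
  | nil => simp
  | append_singleton m δ =>
    have hδ : δ ∈ Δ := hl δ (by simp)
    have hm : ∀ v ∈ m, v ∈ Δ := fun v hv => hl v (by simp [hv])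
    set g := ((m ++ [δ]).map hypReflection).prod
    -- `g` fixes `x`, so `g δ = -m δ` is positive: the prefix `m` makes `δ` negative, and the
    -- exchange lemma cancels the last letter against one of `m`.
    have hgδ : ⟪g δ, x⟫ = ⟪δ, x⟫ := by rw [← g.inner_map_map δ x, hx]
    have hneg : ⟪(m.map hypReflection).prod δ, x⟫ < 0 := by
      have : g δ = -(m.map hypReflection).prod δ := by
        simp [g, hypReflection_apply_self]
      rw [this, inner_neg_left] at hgδ
      linarith [hΔ.inner_pos hδ]
    obtain ⟨m₁, a, m₂, rfl, ha⟩ :=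
      hΔ.exists_eq_append_cons_of_inner_neg hreg hm (hΔ.subset_posRoots hδ) hneg
    have hshort : g = ((m₁ ++ m₂).map hypReflection).prod := by
      have hconj := mul_hypReflection_mul_inv (m₂.map hypReflection).prod δ
      rw [ha] at hconj
      simp only [g, List.map_append, List.map_cons, List.prod_append, List.prod_cons, ← hconj,
        List.map_nil, List.prod_nil]
      group
      rw [mul_assoc _ (hypReflection δ), hypReflection_mul_self, mul_one]
    rw [hshort] at hx ⊢
    refine ih _ (by simp at h ⊢; omega) _ (fun v hv => hm v ?_) hx rfl
    simp only [List.mem_append, List.mem_cons] at hv ⊢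
    tauto

end IsSimpleSystem

end SimpleSystem

lemma eq_one_of_apply_eq_self_of_forall_inner_ne_zero {W : Subgroup (V ≃ₗᵢ[ℝ] V)} [Finite W]
    (hgen : Subgroup.closure (reflections W) = ⊤) {x : V}
    (hreg : ∀ α ∈ roots W, ⟪α, x⟫ ≠ 0) {g : V ≃ₗᵢ[ℝ] V} (hg : g ∈ W) (hx : g x = x) : g = 1 := by
  obtain ⟨Δ, hΔ⟩ := exists_isSimpleSystem (W := W) (x := x)
  have hle : W ≤ Subgroup.closure (hypReflection '' Δ) :=
    (le_closure_hypReflection_roots hgen).trans <| (Subgroup.closure_le _).2 <| by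
      rintro _ ⟨α, hα, rfl⟩
      exact hΔ.hypReflection_mem_closure hreg hα
  obtain ⟨l, hl, rfl⟩ := exists_list_of_mem_closure_hypReflection (hle hg)
  exact hΔ.list_prod_eq_one_of_apply_eq_self hreg l hl hx

section Carter

variable [FiniteDimensional ℝ V] {W : Subgroup (V ≃ₗᵢ[ℝ] V)}
  (hgen : Subgroup.closure (reflections W) = ⊤)
include hgen

lemma exists_mem_roots_mem_movedSpace [Finite W] {w : W} (hw : w ≠ 1) :
    ∃ α ∈ roots W, α ∈ movedSpace (w : V ≃ₗᵢ[ℝ] V) := by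
  by_contra! h
  obtain ⟨x, hx, hreg⟩ :=
    exists_mem_forall_inner_ne_zero roots_finite (fixedSpace (w : V ≃ₗᵢ[ℝ] V)) fun α hα hle =>
      h α hα <| by
        rw [movedSpace_eq_orthogonal]
        exact fun y hy => inner_eq_zero_symm.1 (mem_orthogonal_singleton_iff_inner_right.1 (hle hy))
  exact hw (Subtype.ext (eq_one_of_apply_eq_self_of_forall_inner_ne_zero hgen hreg w.2
    (mem_fixedSpace_iff.1 hx)))

lemma wordLength_le_finrank_movedSpace [Finite W] (w : W) :
    wordLength (reflections W) w ≤ finrank ℝ (movedSpace (w : V ≃ₗᵢ[ℝ] V)) := by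
  induction h : finrank ℝ (movedSpace (w : V ≃ₗᵢ[ℝ] V)) using Nat.strong_induction_on
    generalizing w with
  | _ n ih =>
  rcases eq_or_ne w 1 with rfl | hw
  · have := wordLength_list_prod_le (T := reflections W) (l := []) (by simp)
    rw [List.prod_nil, List.length_nil] at this
    omega
  obtain ⟨α, hα, hmov⟩ := exists_mem_roots_mem_movedSpace hgen hw
  set t : W := ⟨hypReflection α, hα.2⟩
  have ht : IsHypReflection (t : V ≃ₗᵢ[ℝ] V) := ⟨α, ne_zero_of_mem_roots hα, rfl⟩
  obtain ⟨l, hl, hlen, hprod⟩ := exists_list_length_eq_wordLength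
    (T := reflections W) (fun _ hs => isHypReflection_inv hs) hgen (t * w)
  have htt : t * t = 1 := Subtype.ext (hypReflection_mul_self α)
  have hw : (t :: l).prod = w := by
    rw [List.prod_cons, hprod, ← mul_assoc, htt, one_mul]
  have hstep := wordLength_list_prod_le (l := t :: l) fun s hs =>
    (List.mem_cons.1 hs).elim (· ▸ ht) (hl s)
  have hlt : finrank ℝ (movedSpace ((t * w : W) : V ≃ₗᵢ[ℝ] V)) < n :=
    h ▸ finrank_movedSpace_hypReflection_mul_lt (ne_zero_of_mem_roots hα) hmov
  have := ih _ hlt (t * w) rfl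
  rw [hw, List.length_cons] at hstep
  omega

lemma finrank_movedSpace_le_wordLength (w : W) :
    finrank ℝ (movedSpace (w : V ≃ₗᵢ[ℝ] V)) ≤ wordLength (reflections W) w := by
  obtain ⟨l, hl, hlen, hprod⟩ := exists_list_length_eq_wordLength
    (T := reflections W) (fun _ hs => isHypReflection_inv hs) hgen w
  rw [← hlen, ← hprod, Subgroup.val_list_prod, ← List.length_map (f := Subtype.val)]
  exact finrank_movedSpace_list_prod_le _ (by simpa using hl)

theorem finrank_movedSpace_eq_wordLength [Finite W] (w : W) :
    finrank ℝ (movedSpace (w : V ≃ₗᵢ[ℝ] V)) = wordLength (reflections W) w :=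
  (finrank_movedSpace_le_wordLength hgen w).antisymm (wordLength_le_finrank_movedSpace hgen w)

end Carter

end ReflectionGroup

open ReflectionGroup

/-- Let `W` be a finite real reflection group on `V` and `u, v ∈ W` with `uv = vu` and
`ℓ_T(uv) = ℓ_T(u) + ℓ_T(v)`. Then `Mov(v) ⊆ V^u`. -/
theorem movedSpace_le_fixedSpace (W : Subgroup (V ≃ₗᵢ[ℝ] V)) [Finite W]
    (hgen : Subgroup.closure {x : W | IsHypReflection (x : V ≃ₗᵢ[ℝ] V)} = ⊤)
    (u v : W) (hcomm : u * v = v * u)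
    (hadd : wordLength {x : W | IsHypReflection (x : V ≃ₗᵢ[ℝ] V)} (u * v) =
      wordLength {x : W | IsHypReflection (x : V ≃ₗᵢ[ℝ] V)} u +
        wordLength {x : W | IsHypReflection (x : V ≃ₗᵢ[ℝ] V)} v) :
    movedSpace (v : V ≃ₗᵢ[ℝ] V) ≤ fixedSpace (u : V ≃ₗᵢ[ℝ] V) := by
  have hdisjoint : movedSpace (u : V ≃ₗᵢ[ℝ] V) ⊓ movedSpace (v : V ≃ₗᵢ[ℝ] V) = ⊥ := by
    refine movedSpace_inf_eq_bot_of_finrank_add_le (le_of_eq ?_)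
    simp only [← Subgroup.coe_mul, finrank_movedSpace_eq_wordLength hgen, hadd]
  exact movedSpace_le_fixedSpace_of_commute (congrArg Subtype.val hcomm) hdisjoint
end

section
/- Let W be the universal Coxeter group on three generators s, t, u (no relations between distinct generators). Then {s, t, tut} is a simple system for W, so X = ⟨s, tut⟩ is a parabolic subgroup in the sense of dual Coxeter theory, but X is not conjugate in W to any of the three standard rank-2 parabolic subgroups ⟨s,t⟩, ⟨s,u⟩, ⟨t,u⟩. -/
/-!
Since `t` is an involution and there are no relations between distinct generators, the
assignment `s ↦ s, t ↦ t, u ↦ tut` defines an endomorphism of `W` which is its own inverse;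
transporting the Coxeter system along this automorphism gives the simple system `{s, t, tut}`.

For the second part, map `W` to `S₃` by `s ↦ (1 2), t ↦ (0 1), u ↦ (0 2)`. Then `tut ↦ (1 2)`
as well, so every conjugate of `⟨s, tut⟩` maps onto a subgroup of order two, whereas each of
`⟨s, t⟩`, `⟨s, u⟩`, `⟨t, u⟩` maps onto a subgroup containing two distinct transpositions.
-/

/-- The Coxeter matrix of the universal Coxeter group on three generators:
no relation between distinct generators (`0` encodes `∞`). -/
def universalMatrix3 : CoxeterMatrix (Fin 3) where
  M := Matrix.of fun i j => if i = j then 1 else 0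
  isSymm := by unfold Matrix.IsSymm; aesop
  diagonal := by simp
  off_diagonal := by simp

lemma universalMatrix3_isLiftable {G : Type*} [Monoid G] (f : Fin 3 → G)
    (h : ∀ i, f i * f i = 1) : universalMatrix3.IsLiftable f := by
  intro i j
  rcases eq_or_ne i j with rfl | hij
  · rw [universalMatrix3.diagonal i, pow_one, h]
  · have hM : universalMatrix3 i j = 0 := if_neg hij
    rw [hM, pow_zero]

namespace CoxeterSystem

variable {W : Type*} [Group W] (cs : CoxeterSystem universalMatrix3 W)

def conjSimpleTwoHom : W →* W :=
  cs.lift ⟨![cs.simple 0, cs.simple 1, cs.simple 1 * cs.simple 2 * cs.simple 1], by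
    refine universalMatrix3_isLiftable _ fun i => ?_
    fin_cases i <;> simp [mul_assoc]⟩

lemma conjSimpleTwoHom_simple (i : Fin 3) :
    cs.conjSimpleTwoHom (cs.simple i) =
      ![cs.simple 0, cs.simple 1, cs.simple 1 * cs.simple 2 * cs.simple 1] i :=
  cs.lift_apply_simple _ i

lemma conjSimpleTwoHom_comp_self :
    cs.conjSimpleTwoHom.comp cs.conjSimpleTwoHom = MonoidHom.id W := by
  refine cs.ext_simple fun i => ?_
  fin_cases i <;> simp [conjSimpleTwoHom_simple, mul_assoc]

def conjSimpleTwo : CoxeterSystem universalMatrix3 W :=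
  cs.map (cs.conjSimpleTwoHom.toMulEquiv cs.conjSimpleTwoHom cs.conjSimpleTwoHom_comp_self
    cs.conjSimpleTwoHom_comp_self)

def transpositionRep : W →* Equiv.Perm (Fin 3) :=
  cs.lift ⟨![Equiv.swap 1 2, Equiv.swap 0 1, Equiv.swap 0 2],
    universalMatrix3_isLiftable _ (by decide)⟩

lemma transpositionRep_simple (i : Fin 3) :
    cs.transpositionRep (cs.simple i) = ![Equiv.swap 1 2, Equiv.swap 0 1, Equiv.swap 0 2] i :=
  cs.lift_apply_simple _ i

end CoxeterSystem

section Subgroup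

open Subgroup

variable {G H : Type*} [Group G] [Group H]

lemma eq_one_or_eq_of_mem_zpowers_of_mul_self_eq_one {x y : G} (hx : x * x = 1)
    (hy : y ∈ zpowers x) : y = 1 ∨ y = x := by
  obtain ⟨k, rfl⟩ := mem_zpowers_iff.1 hy
  obtain ⟨m, rfl | rfl⟩ := Int.even_or_odd' k
  · simp [zpow_mul, sq, hx]
  · simp [zpow_add, zpow_mul, sq, hx]

lemma map_map_conj (f : G →* H) (g : G) (K : Subgroup G) :
    (K.map (MulAut.conj g).toMonoidHom).map f =
      (K.map f).map (MulAut.conj (f g)).toMonoidHom := by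
  rw [map_map, map_map]
  congr 1
  ext x
  simp

/-- `f` maps every conjugate of `⟨a, b⟩` onto a group of order at most two, which cannot
contain the two distinct nontrivial images of `c` and `d`. -/
lemma map_conj_closure_pair_ne_closure_pair (f : G →* H) {a b c d : G} (g : G)
    (ha : a * a = 1) (hab : f a = f b) (hc : f c ≠ 1) (hd : f d ≠ 1) (hcd : f c ≠ f d) :
    (closure {a, b}).map (MulAut.conj g).toMonoidHom ≠ closure {c, d} := by
  intro h
  set x := MulAut.conj (f g) (f a)
  have hx : x * x = 1 := by rw [← map_mul, ← map_mul, ha, map_one, map_one]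
  have hmap : (closure {c, d}).map f = zpowers x := by
    rw [← h, map_map_conj, MonoidHom.map_closure, Set.image_pair, hab, Set.pair_eq_singleton,
      ← zpowers_eq_closure, MonoidHom.map_zpowers, ← hab]
    rfl
  have hmem : ∀ y ∈ ({c, d} : Set G), f y = 1 ∨ f y = x := fun y hy =>
    eq_one_or_eq_of_mem_zpowers_of_mul_self_eq_one hx
      (hmap ▸ mem_map_of_mem f (subset_closure hy))
  obtain hc' | hc' := hmem c (by simp)
  · exact hc hc'
  obtain hd' | hd' := hmem d (by simp)
  · exact hd hd'
  exact hcd (hc'.trans hd'.symm)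

end Subgroup

open Subgroup in
/-- Let `W` be the universal Coxeter group on three generators `s, t, u`. Then
`{s, t, tut}` is a simple system for `W` (so `X = ⟨s, tut⟩` is a parabolic subgroup in
the dual sense), but `X` is not conjugate in `W` to any of the three standard rank-2
parabolic subgroups `⟨s,t⟩`, `⟨s,u⟩`, `⟨t,u⟩`. -/
theorem universal_parabolic_not_conjugate_standard
    {W : Type*} [Group W] (cs : CoxeterSystem universalMatrix3 W)
    (s t u : W) (hs : s = cs.simple 0) (ht : t = cs.simple 1) (hu : u = cs.simple 2) :
    (∃ cs' : CoxeterSystem universalMatrix3 W,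
      cs'.simple 0 = s ∧ cs'.simple 1 = t ∧ cs'.simple 2 = t * u * t) ∧
    ∀ g : W,
      Subgroup.map (MulAut.conj g).toMonoidHom (closure {s, t * u * t}) ∉
        ({closure {s, t}, closure {s, u}, closure {t, u}} : Set (Subgroup W)) := by
  subst hs ht hu
  refine ⟨⟨cs.conjSimpleTwo, ?_, ?_, ?_⟩, fun g hg => ?_⟩
  · exact cs.conjSimpleTwoHom_simple 0
  · exact cs.conjSimpleTwoHom_simple 1
  · exact cs.conjSimpleTwoHom_simple 2
  have hs : cs.simple 0 * cs.simple 0 = 1 := cs.simple_mul_simple_self 0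
  have hπ : cs.transpositionRep (cs.simple 0) =
      cs.transpositionRep (cs.simple 1 * cs.simple 2 * cs.simple 1) := by
    simp only [map_mul, CoxeterSystem.transpositionRep_simple]
    decide
  simp only [Set.mem_insert_iff, Set.mem_singleton_iff] at hg
  obtain hg | hg | hg := hg <;>
    refine map_conj_closure_pair_ne_closure_pair cs.transpositionRep g hs hπ ?_ ?_ ?_ hg <;>
    simp only [CoxeterSystem.transpositionRep_simple] <;> decide
end

section
/- Let W be a finite real reflection group on V and w ∈ W a quasi-Coxeter element, i.e., some T-reduced expression of w generates W. Then w has no nonzero fixed vector in V: V^w = 0, equivalently ℓ_T(w) = dim V. -/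
variable {V : Type*} [NormedAddCommGroup V] [InnerProductSpace ℝ V] [FiniteDimensional ℝ V]

open RealInnerProductSpace Submodule

section

variable {E : Type*} [NormedAddCommGroup E] [InnerProductSpace ℝ E]

theorem reflection_orthogonal_singleton_apply {α : E} (hα : ‖α‖ = 1) (v : E) :
    reflection (ℝ ∙ α)ᗮ v = v - (2 * ⟪α, v⟫) • α := by
  rw [reflection_orthogonal_apply, reflection_singleton_apply, hα]
  simp [mul_smul, two_smul]

theorem reflection_orthogonal_singleton_neg (α : E) :
    reflection (ℝ ∙ -α)ᗮ = reflection (ℝ ∙ α)ᗮ := by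
  simp only [← neg_one_smul ℝ α, span_singleton_smul_eq isUnit_one.neg α]

theorem reflection_orthogonal_singleton_apply_of_inner_eq_zero {α v : E} (h : ⟪α, v⟫ = 0) :
    reflection (ℝ ∙ α)ᗮ v = v :=
  reflection_mem_subspace_eq_self (mem_orthogonal_singleton_iff_inner_right.mpr h)

theorem reflection_orthogonal_singleton_conj (g : E ≃ₗᵢ[ℝ] E) {α : E} (hα : ‖α‖ = 1) :
    g * reflection (ℝ ∙ α)ᗮ * g⁻¹ = reflection (ℝ ∙ g α)ᗮ := by
  ext v
  have hg : ⟪α, g⁻¹ v⟫ = ⟪g α, v⟫ := by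
    rw [← g.inner_map_map, LinearIsometryEquiv.coe_inv, g.apply_symm_apply]
  simp only [LinearIsometryEquiv.coe_mul, Function.comp_apply]
  rw [reflection_orthogonal_singleton_apply hα,
    reflection_orthogonal_singleton_apply (by rwa [g.norm_map]), map_sub, map_smul, hg,
    LinearIsometryEquiv.coe_inv, g.apply_symm_apply]

theorem eq_or_eq_neg_of_reflection_eq {α β : E} (hα : ‖α‖ = 1) (hβ : ‖β‖ = 1)
    (h : reflection (ℝ ∙ α)ᗮ = reflection (ℝ ∙ β)ᗮ) : β = α ∨ β = -α := by
  have hneg : reflection (ℝ ∙ α)ᗮ β = -β := by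
    rw [h, reflection_orthogonalComplement_singleton_eq_neg]
  rw [reflection_orthogonal_singleton_apply hα] at hneg
  have hβα : β = ⟪α, β⟫ • α := by linear_combination (norm := module) (2⁻¹ : ℝ) • hneg
  have hc : ‖⟪α, β⟫‖ * ‖α‖ = 1 := by rw [← norm_smul, ← hβα, hβ]
  rw [hα, mul_one, Real.norm_eq_abs] at hc
  rcases abs_eq zero_le_one |>.mp hc with hc | hc
  · left; rw [hβα, hc, one_smul]
  · right; rw [hβα, hc, neg_one_smul]

theorem IsHypReflection.exists_norm_eq_one {f : E ≃ₗᵢ[ℝ] E} (hf : IsHypReflection f) :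
    ∃ α : E, ‖α‖ = 1 ∧ f = reflection (ℝ ∙ α)ᗮ := by
  obtain ⟨α, hα, rfl⟩ := hf
  refine ⟨‖α‖⁻¹ • α, norm_smul_inv_norm hα, ?_⟩
  simp only [span_singleton_smul_eq (inv_ne_zero (norm_ne_zero_iff.mpr hα)).isUnit]

section Cone

variable {x y : E} {S : Set E}

theorem eq_zero_or_inner_pos_of_mem_hull (hS : ∀ s ∈ S, 0 < ⟪x, s⟫)
    (hy : y ∈ PointedCone.hull ℝ S) : y = 0 ∨ 0 < ⟪x, y⟫ := by
  induction hy using Submodule.span_induction with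
  | mem s hs => exact .inr (hS s hs)
  | zero => exact .inl rfl
  | add a b _ _ ha hb =>
    rcases ha with rfl | ha
    · simpa using hb
    rcases hb with rfl | hb
    · simpa using Or.inr ha
    exact .inr (by rw [inner_add_right]; positivity)
  | smul c a _ ha =>
    obtain ⟨c, hc⟩ := c
    rcases ha with rfl | ha
    · simp
    rcases hc.eq_or_lt with rfl | hc
    · simp
    exact .inr (by change 0 < ⟪x, c • a⟫; rw [real_inner_smul_right]; positivity)

theorem eq_zero_of_add_eq_zero_of_mem_hull (hS : ∀ s ∈ S, 0 < ⟪x, s⟫) {z : E}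
    (hy : y ∈ PointedCone.hull ℝ S) (hz : z ∈ PointedCone.hull ℝ S) (h : y + z = 0) : y = 0 := by
  refine (eq_zero_or_inner_pos_of_mem_hull hS hy).resolve_right fun hxy => ?_
  have hxz : 0 ≤ ⟪x, z⟫ := by
    rcases eq_zero_or_inner_pos_of_mem_hull hS hz with rfl | hxz
    · simp
    · exact hxz.le
  have : ⟪x, y + z⟫ = 0 := by rw [h, inner_zero_right]
  rw [inner_add_right] at this
  linarith

theorem inner_nonneg_of_mem_hull (hS : ∀ s ∈ S, 0 ≤ ⟪x, s⟫) (hy : y ∈ PointedCone.hull ℝ S) :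
    0 ≤ ⟪x, y⟫ := by
  have hx : x ∈ PointedCone.dual (innerₗ E) (PointedCone.hull ℝ S) := by
    rw [PointedCone.dual_hull]
    intro s hs
    simpa [real_inner_comm] using hS s hs
  simpa [real_inner_comm] using hx hy

theorem exists_inner_pos_of_mem_hull (hy : y ∈ PointedCone.hull ℝ S) (hy₀ : y ≠ 0) :
    ∃ s ∈ S, 0 < ⟪y, s⟫ := by
  by_contra! h
  have : 0 ≤ ⟪-y, y⟫ := inner_nonneg_of_mem_hull (fun s hs => by simpa using h s hs) hy
  rw [inner_neg_left, neg_nonneg, real_inner_self_nonpos] at this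
  exact hy₀ this

theorem exists_eq_smul_add_of_mem_hull {δ : E} (hδ : δ ∈ S) (hy : y ∈ PointedCone.hull ℝ S) :
    ∃ a : ℝ, 0 ≤ a ∧ ∃ z ∈ PointedCone.hull ℝ (S \ {δ}), y = a • δ + z := by
  rw [← Set.insert_eq_of_mem hδ, ← Set.insert_sdiff_singleton, PointedCone.hull,
    Submodule.span_insert, Submodule.mem_sup] at hy
  obtain ⟨_, hw, z, hz, rfl⟩ := hy
  obtain ⟨⟨a, ha⟩, rfl⟩ := Submodule.mem_span_singleton.mp hw
  exact ⟨a, ha, z, hz, rfl⟩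

end Cone

theorem exists_mem_forall_inner_ne_zero (U : Submodule ℝ E) (S : Finset E)
    (hS : ∀ α ∈ S, ¬ U ≤ (ℝ ∙ α)ᗮ) : ∃ x ∈ U, ∀ α ∈ S, ⟪x, α⟫ ≠ 0 := by
  by_contra! h
  have hcover : ⋃ α : S, ((((ℝ ∙ (α : E))ᗮ).comap U.subtype : Submodule ℝ U) : Set U) =
      Set.univ := by
    refine Set.eq_univ_of_forall fun u => ?_
    obtain ⟨α, hα, hu⟩ := h u u.2
    exact Set.mem_iUnion.mpr ⟨⟨α, hα⟩, mem_orthogonal_singleton_iff_inner_left.mpr hu⟩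
  obtain ⟨⟨α, hα⟩, htop⟩ := Subspace.exists_eq_top_of_iUnion_eq_univ hcover
  exact hS α hα fun u hu => by
    simpa using (htop ▸ Submodule.mem_top : (⟨u, hu⟩ : U) ∈ ((ℝ ∙ α)ᗮ).comap U.subtype)

section RootSystem

variable {x β δ : E} {Φ Δ : Finset E}

structure IsUnitRootSystem (Φ : Finset E) : Prop where
  norm_eq_one : ∀ α ∈ Φ, ‖α‖ = 1
  reflection_mem : ∀ α ∈ Φ, ∀ β ∈ Φ, reflection (ℝ ∙ α)ᗮ β ∈ Φ

theorem IsUnitRootSystem.neg_mem (hΦ : IsUnitRootSystem Φ) {α : E} (hα : α ∈ Φ) : -α ∈ Φ := by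
  simpa [reflection_orthogonalComplement_singleton_eq_neg] using hΦ.reflection_mem α hα α hα

noncomputable def positiveRoots (x : E) (Φ : Finset E) : Finset E :=
  Φ.filter (0 < ⟪x, ·⟫)

theorem mem_positiveRoots : β ∈ positiveRoots x Φ ↔ β ∈ Φ ∧ 0 < ⟪x, β⟫ :=
  Finset.mem_filter

/-- The simple systems of Humphreys, §1.3, characterised by irredundancy rather than by linear
independence. -/
structure IsSimpleSystem (x : E) (Φ Δ : Finset E) : Prop where
  subset_positiveRoots : Δ ⊆ positiveRoots x Φ
  mem_hull : ∀ β ∈ positiveRoots x Φ, β ∈ PointedCone.hull ℝ (Δ : Set E)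
  notMem_hull_diff : ∀ δ ∈ Δ, δ ∉ PointedCone.hull ℝ ((Δ : Set E) \ {δ})

theorem exists_isSimpleSystem (x : E) (Φ : Finset E) : ∃ Δ, IsSimpleSystem x Φ Δ := by
  classical
  let F : Finset (Finset E) := (positiveRoots x Φ).powerset.filter
    fun Δ => ∀ β ∈ positiveRoots x Φ, β ∈ PointedCone.hull ℝ (Δ : Set E)
  obtain ⟨Δ, hΔF, hmin⟩ := F.exists_min_image Finset.card
    ⟨_, Finset.mem_filter.mpr ⟨Finset.mem_powerset_self _, fun _ hβ => PointedCone.subset_hull hβ⟩⟩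
  rw [Finset.mem_filter, Finset.mem_powerset] at hΔF
  refine ⟨Δ, hΔF.1, hΔF.2, fun δ hδ hmem => ?_⟩
  have hle : PointedCone.hull ℝ (Δ : Set E) ≤ PointedCone.hull ℝ (Δ.erase δ : Set E) := by
    rw [PointedCone.hull, span_le, Finset.coe_erase]
    intro γ hγ
    by_cases h : γ = δ
    · exact h ▸ hmem
    · exact PointedCone.subset_hull ⟨hγ, h⟩
  have := hmin (Δ.erase δ) (Finset.mem_filter.mpr ⟨Finset.mem_powerset.mpr
    ((Finset.erase_subset _ _).trans hΔF.1), fun β hβ => hle (hΔF.2 β hβ)⟩)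
  exact (Finset.card_erase_lt_of_mem hδ).not_ge this

noncomputable def reflectionProd (L : List E) : E ≃ₗᵢ[ℝ] E :=
  (L.map fun δ => reflection (ℝ ∙ δ)ᗮ).prod

@[simp]
theorem reflectionProd_cons (δ : E) (L : List E) :
    reflectionProd (δ :: L) = reflection (ℝ ∙ δ)ᗮ * reflectionProd L :=
  List.prod_cons

theorem reflectionProd_append_singleton (L : List E) (α : E) :
    reflectionProd (L ++ [α]) = reflectionProd L * reflection (ℝ ∙ α)ᗮ := by
  simp [reflectionProd]

theorem IsUnitRootSystem.reflectionProd_apply_mem (hΦ : IsUnitRootSystem Φ) {L : List E}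
    (hL : ∀ δ ∈ L, δ ∈ Φ) (hβ : β ∈ Φ) : reflectionProd L β ∈ Φ := by
  induction L with
  | nil => exact hβ
  | cons δ L ih =>
    rw [reflectionProd_cons, LinearIsometryEquiv.coe_mul, Function.comp_apply]
    exact hΦ.reflection_mem δ (hL δ List.mem_cons_self) _
      (ih fun γ hγ => hL γ (List.mem_cons_of_mem δ hγ))

theorem reflectionProd_cons_eq_dropLast {L : List E} (hL : L ≠ []) (hα : ‖L.getLast hL‖ = 1)
    (h : reflectionProd L (L.getLast hL) = -δ) :
    reflectionProd (δ :: L) = reflectionProd L.dropLast := by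
  set α := L.getLast hL
  have hsplit : reflectionProd L = reflectionProd L.dropLast * reflection (ℝ ∙ α)ᗮ := by
    rw [← reflectionProd_append_singleton, List.dropLast_append_getLast]
  have hδ : reflection (ℝ ∙ δ)ᗮ =
      reflectionProd L * reflection (ℝ ∙ α)ᗮ * (reflectionProd L)⁻¹ := by
    rw [reflection_orthogonal_singleton_conj _ hα, h, reflection_orthogonal_singleton_neg]
  rw [reflectionProd_cons, hδ, inv_mul_cancel_right, hsplit, mul_assoc, reflection_mul_reflection,
    mul_one]

def IsReducedWord (Δ : Set E) (L : List E) : Prop :=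
  (∀ δ ∈ L, δ ∈ Δ) ∧ ∀ L' : List E, (∀ δ ∈ L', δ ∈ Δ) →
    reflectionProd L' = reflectionProd L → L.length ≤ L'.length

theorem IsReducedWord.of_cons {Δ : Set E} {L : List E} (h : IsReducedWord Δ (δ :: L)) :
    IsReducedWord Δ L := by
  refine ⟨fun γ hγ => h.1 γ (List.mem_cons_of_mem δ hγ), fun L' hL' hprod => ?_⟩
  have := h.2 (δ :: L') (List.forall_mem_cons.mpr ⟨h.1 δ List.mem_cons_self, hL'⟩)
    (by rw [reflectionProd_cons, reflectionProd_cons, hprod])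
  simpa using this

theorem exists_isReducedWord {Δ : Set E} {w : E ≃ₗᵢ[ℝ] E}
    (hw : w ∈ Subgroup.closure ((fun δ => reflection (ℝ ∙ δ)ᗮ) '' Δ)) :
    ∃ L, IsReducedWord Δ L ∧ reflectionProd L = w := by
  classical
  have hex : ∃ n, ∃ L : List E, (∀ δ ∈ L, δ ∈ Δ) ∧ reflectionProd L = w ∧ L.length = n := by
    induction hw using Subgroup.closure_induction_left with
    | one => exact ⟨0, [], by simp, rfl, rfl⟩
    | mul_left _ hs _ _ ih | inv_mul_cancel _ hs _ _ ih =>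
      obtain ⟨δ, hδ, rfl⟩ := hs
      obtain ⟨-, L, hL, rfl, -⟩ := ih
      exact ⟨_, δ :: L, List.forall_mem_cons.mpr ⟨hδ, hL⟩,
        by simp [Submodule.reflection_inv], rfl⟩
  obtain ⟨L, hL, hLw, hlen⟩ := Nat.find_spec hex
  exact ⟨L, ⟨hL, fun L' hL' h => hlen ▸ Nat.find_min' hex ⟨L', hL', h.trans hLw, rfl⟩⟩, hLw⟩

namespace IsSimpleSystem

theorem mem_roots (hΔ : IsSimpleSystem x Φ Δ) (hδ : δ ∈ Δ) : δ ∈ Φ :=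
  (mem_positiveRoots.mp (hΔ.subset_positiveRoots hδ)).1

theorem inner_pos (hΔ : IsSimpleSystem x Φ Δ) (hδ : δ ∈ Δ) : 0 < ⟪x, δ⟫ :=
  (mem_positiveRoots.mp (hΔ.subset_positiveRoots hδ)).2

theorem eq_zero_of_smul_eq (hΔ : IsSimpleSystem x Φ Δ) (hδ : δ ∈ Δ) {r : ℝ} {z : E}
    (hz : z ∈ PointedCone.hull ℝ ((Δ : Set E) \ {δ})) (h : r • δ = z) : z = 0 := by
  rcases lt_or_ge 0 r with hr | hr
  · refine absurd ?_ (hΔ.notMem_hull_diff δ hδ)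
    have := PointedCone.smul_mem _ (inv_nonneg.mpr hr.le) hz
    rwa [← h, inv_smul_smul₀ hr.ne'] at this
  · refine (eq_zero_or_inner_pos_of_mem_hull (fun _ hs => hΔ.inner_pos hs.1) hz).resolve_right ?_
    rw [← h, real_inner_smul_right, not_lt]
    exact mul_nonpos_of_nonpos_of_nonneg hr (hΔ.inner_pos hδ).le

theorem eq_smul_of_add_eq_smul (hΔ : IsSimpleSystem x Φ Δ) (hδ : δ ∈ Δ) {u v : E} {c : ℝ}
    (hu : u ∈ PointedCone.hull ℝ (Δ : Set E)) (hv : v ∈ PointedCone.hull ℝ (Δ : Set E))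
    (h : u + v = c • δ) : ∃ a : ℝ, 0 ≤ a ∧ u = a • δ := by
  obtain ⟨a, ha, u', hu', rfl⟩ := exists_eq_smul_add_of_mem_hull hδ hu
  obtain ⟨b, -, v', hv', rfl⟩ := exists_eq_smul_add_of_mem_hull hδ hv
  have h0 : u' + v' = 0 := hΔ.eq_zero_of_smul_eq hδ (add_mem hu' hv') (r := c - a - b)
    (by rw [sub_smul, sub_smul, ← h]; abel)
  refine ⟨a, ha, ?_⟩
  rw [eq_zero_of_add_eq_zero_of_mem_hull (fun _ hs => hΔ.inner_pos hs.1) hu' hv' h0, add_zero]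

theorem reflection_mem_positiveRoots (hΔ : IsSimpleSystem x Φ Δ) (hΦ : IsUnitRootSystem Φ)
    (hx : ∀ α ∈ Φ, ⟪x, α⟫ ≠ 0) (hδ : δ ∈ Δ) (hβ : β ∈ positiveRoots x Φ) (hne : β ≠ δ) :
    reflection (ℝ ∙ δ)ᗮ β ∈ positiveRoots x Φ := by
  obtain ⟨hβΦ, hxβ⟩ := mem_positiveRoots.mp hβ
  have hδ₁ := hΦ.norm_eq_one δ (hΔ.mem_roots hδ)
  have hγ := hΦ.reflection_mem δ (hΔ.mem_roots hδ) β hβΦ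
  refine mem_positiveRoots.mpr ⟨hγ, (hx _ hγ).lt_or_gt.resolve_left fun hneg => hne ?_⟩
  have hγ' : -reflection (ℝ ∙ δ)ᗮ β ∈ PointedCone.hull ℝ (Δ : Set E) :=
    hΔ.mem_hull _ (mem_positiveRoots.mpr ⟨hΦ.neg_mem hγ, by rw [inner_neg_right]; linarith⟩)
  -- `β` and `-s_δ β` are positive roots adding up to a multiple of `δ`
  obtain ⟨a, ha, rfl⟩ := hΔ.eq_smul_of_add_eq_smul hδ (hΔ.mem_hull β hβ) hγ'
    (c := 2 * ⟪δ, β⟫) (by rw [reflection_orthogonal_singleton_apply hδ₁]; abel)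
  have ha₁ := hΦ.norm_eq_one _ hβΦ
  rw [norm_smul, hδ₁, Real.norm_of_nonneg ha, mul_one] at ha₁
  rw [ha₁, one_smul]

theorem exists_mem_closure_apply_eq (hΔ : IsSimpleSystem x Φ Δ) (hΦ : IsUnitRootSystem Φ)
    (hx : ∀ α ∈ Φ, ⟪x, α⟫ ≠ 0) (hβ : β ∈ positiveRoots x Φ) :
    ∃ g ∈ Subgroup.closure ((fun δ => reflection (ℝ ∙ δ)ᗮ) '' (Δ : Set E)),
      ∃ δ ∈ Δ, g δ = β := by
  classical
  set G := Subgroup.closure ((fun δ => reflection (ℝ ∙ δ)ᗮ) '' (Δ : Set E))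
  by_contra hβbad
  -- a counterexample of minimal height `⟪x, β⟫`
  obtain ⟨β, hβ, hmin⟩ := ((positiveRoots x Φ).filter fun β => ¬ ∃ g ∈ G, ∃ δ ∈ Δ, g δ = β)
    |>.exists_min_image (⟪x, ·⟫) ⟨β, Finset.mem_filter.mpr ⟨hβ, hβbad⟩⟩
  obtain ⟨hβP, hβbad⟩ := Finset.mem_filter.mp hβ
  have hβ₀ : β ≠ 0 := norm_ne_zero_iff.mp <| by
    rw [hΦ.norm_eq_one β (mem_positiveRoots.mp hβP).1]; exact one_ne_zero
  obtain ⟨δ, hδ, hβδ⟩ := exists_inner_pos_of_mem_hull (hΔ.mem_hull β hβP) hβ₀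
  have hne : β ≠ δ := by
    rintro rfl
    exact hβbad ⟨1, G.one_mem, β, hδ, rfl⟩
  have hlt : ⟪x, reflection (ℝ ∙ δ)ᗮ β⟫ < ⟪x, β⟫ := by
    rw [reflection_orthogonal_singleton_apply (hΦ.norm_eq_one δ (hΔ.mem_roots hδ)),
      inner_sub_right, real_inner_smul_right, real_inner_comm β δ]
    nlinarith [hΔ.inner_pos hδ]
  obtain ⟨g, hg, δ', hδ', hgδ'⟩ : ∃ g ∈ G, ∃ δ' ∈ Δ, g δ' = reflection (ℝ ∙ δ)ᗮ β := by
    by_contra h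
    exact (hmin _ (Finset.mem_filter.mpr
      ⟨hΔ.reflection_mem_positiveRoots hΦ hx hδ hβP hne, h⟩)).not_gt hlt
  refine hβbad ⟨reflection (ℝ ∙ δ)ᗮ * g, G.mul_mem (Subgroup.subset_closure ⟨δ, hδ, rfl⟩) hg,
    δ', hδ', ?_⟩
  rw [LinearIsometryEquiv.coe_mul, Function.comp_apply, hgδ', reflection_reflection]

theorem reflection_mem_closure (hΔ : IsSimpleSystem x Φ Δ) (hΦ : IsUnitRootSystem Φ)
    (hx : ∀ α ∈ Φ, ⟪x, α⟫ ≠ 0) {α : E} (hα : α ∈ Φ) :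
    reflection (ℝ ∙ α)ᗮ ∈ Subgroup.closure ((fun δ => reflection (ℝ ∙ δ)ᗮ) '' (Δ : Set E)) := by
  wlog hpos : 0 < ⟪x, α⟫ generalizing α
  · rw [← reflection_orthogonal_singleton_neg]
    refine this (hΦ.neg_mem hα) ?_
    rw [inner_neg_right, neg_pos]
    exact (hx α hα).lt_or_gt.resolve_right hpos
  obtain ⟨g, hg, δ, hδ, rfl⟩ :=
    hΔ.exists_mem_closure_apply_eq hΦ hx (mem_positiveRoots.mpr ⟨hα, hpos⟩)
  rw [← reflection_orthogonal_singleton_conj g (hΦ.norm_eq_one δ (hΔ.mem_roots hδ))]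
  exact mul_mem (mul_mem hg (Subgroup.subset_closure ⟨δ, hδ, rfl⟩)) (inv_mem hg)

theorem inner_reflectionProd_getLast_neg (hΔ : IsSimpleSystem x Φ Δ) (hΦ : IsUnitRootSystem Φ)
    (hx : ∀ α ∈ Φ, ⟪x, α⟫ ≠ 0) :
    ∀ {L : List E} (_ : IsReducedWord Δ L) (hne : L ≠ []),
      ⟪x, reflectionProd L (L.getLast hne)⟫ < 0
  | [δ], hL, _ => by
    simpa [reflectionProd, reflection_orthogonalComplement_singleton_eq_neg] using
      hΔ.inner_pos (hL.1 δ List.mem_cons_self)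
  | δ :: α :: L, hL, _ => by
    have hne : α :: L ≠ [] := List.cons_ne_nil α L
    have ih := hΔ.inner_reflectionProd_getLast_neg hΦ hx hL.of_cons hne
    have hroots : ∀ γ ∈ α :: L, γ ∈ Φ := fun γ hγ => hΔ.mem_roots (hL.of_cons.1 γ hγ)
    set β := reflectionProd (α :: L) ((α :: L).getLast hne)
    have hβ : β ∈ Φ := hΦ.reflectionProd_apply_mem hroots (hroots _ (List.getLast_mem hne))
    have hβδ : -β ≠ δ := by
      -- otherwise `δ` and the last letter cancel, giving a shorter word
      intro h
      have hshort := hL.2 _ (fun γ hγ => hL.of_cons.1 γ (List.dropLast_subset _ hγ))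
        (reflectionProd_cons_eq_dropLast hne (hΦ.norm_eq_one _ (hroots _ (List.getLast_mem hne)))
          (by rw [← h, neg_neg])).symm
      simp at hshort
    have hpos := mem_positiveRoots.mp (hΔ.reflection_mem_positiveRoots hΦ hx
      (hL.1 δ List.mem_cons_self) (mem_positiveRoots.mpr ⟨hΦ.neg_mem hβ, by
        rw [inner_neg_right]; linarith⟩) hβδ)
    rw [map_neg, inner_neg_right, neg_pos] at hpos
    rw [List.getLast_cons hne, reflectionProd_cons, LinearIsometryEquiv.coe_mul,
      Function.comp_apply]
    exact hpos.2

end IsSimpleSystem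

theorem IsUnitRootSystem.eq_one_of_apply_eq_self (hΦ : IsUnitRootSystem Φ)
    (hx : ∀ α ∈ Φ, ⟪x, α⟫ ≠ 0) {w : E ≃ₗᵢ[ℝ] E}
    (hw : w ∈ Subgroup.closure ((fun α => reflection (ℝ ∙ α)ᗮ) '' (Φ : Set E)))
    (hfix : w x = x) : w = 1 := by
  obtain ⟨Δ, hΔ⟩ := exists_isSimpleSystem x Φ
  have hwΔ : w ∈ Subgroup.closure ((fun δ => reflection (ℝ ∙ δ)ᗮ) '' (Δ : Set E)) :=
    (Subgroup.closure_le _).mpr (by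
      rintro _ ⟨α, hα, rfl⟩
      exact hΔ.reflection_mem_closure hΦ hx hα) hw
  obtain ⟨L, hL, rfl⟩ := exists_isReducedWord hwΔ
  by_contra hne1
  have hne : L ≠ [] := by
    rintro rfl
    exact hne1 rfl
  have hneg := hΔ.inner_reflectionProd_getLast_neg hΦ hx hL hne
  rw [← hfix, LinearIsometryEquiv.inner_map_map] at hneg
  exact hneg.not_gt (hΔ.inner_pos (hL.1 _ (List.getLast_mem hne)))

end RootSystem

theorem mem_fixedSpace {f : E ≃ₗᵢ[ℝ] E} {v : E} : v ∈ fixedSpace f ↔ f v = v := by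
  simp [fixedSpace, sub_eq_zero]

theorem mem_fixedSpace_of_mem_orthogonal_movedSpace {f : E ≃ₗᵢ[ℝ] E} {z : E}
    (hz : z ∈ (movedSpace f)ᗮ) : z ∈ fixedSpace f := by
  have hperp : ⟪f z - z, z⟫ = 0 := hz _ ⟨z, by simp⟩
  rw [inner_sub_left, real_inner_self_eq_norm_sq, sub_eq_zero] at hperp
  have : ‖f z - z‖ ^ 2 = 0 := by rw [norm_sub_sq_real, hperp, f.norm_map]; ring
  rw [mem_fixedSpace, ← sub_eq_zero, ← norm_eq_zero]
  exact pow_eq_zero_iff two_ne_zero |>.mp this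

theorem orthogonal_fixedSpace_le_movedSpace [FiniteDimensional ℝ E] (f : E ≃ₗᵢ[ℝ] E) :
    (fixedSpace f)ᗮ ≤ movedSpace f := by
  have h := Submodule.orthogonal_le fun z (hz : z ∈ (movedSpace f)ᗮ) =>
    mem_fixedSpace_of_mem_orthogonal_movedSpace hz
  rwa [orthogonal_orthogonal] at h

theorem fixedSpace_lt_fixedSpace_reflection_mul [FiniteDimensional ℝ E] (w : E ≃ₗᵢ[ℝ] E) {α : E}
    (hα : ‖α‖ = 1) (hle : fixedSpace w ≤ (ℝ ∙ α)ᗮ) :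
    fixedSpace w < fixedSpace (reflection (ℝ ∙ α)ᗮ * w) := by
  obtain ⟨y, hy⟩ := orthogonal_fixedSpace_le_movedSpace w
    (Submodule.orthogonal_le hle (le_orthogonal_orthogonal _ (mem_span_singleton_self α)))
  have hwy : w y = y + α := by
    simp only [LinearMap.sub_apply, LinearMap.id_apply, LinearEquiv.coe_coe,
      LinearIsometryEquiv.coe_toLinearEquiv] at hy
    rw [← hy, add_sub_cancel]
  -- `w` is an isometry, so `y` and `y + α` have the same length and `s_α y = y + α`
  have hyα : 2 * ⟪α, y⟫ = -1 := by
    have h := congrArg (· ^ 2) (w.norm_map y)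
    simp only [hwy, norm_add_sq_real, hα] at h
    rw [real_inner_comm]
    linarith
  have hsy : reflection (ℝ ∙ α)ᗮ y = w y := by
    rw [reflection_orthogonal_singleton_apply hα, hyα, hwy, neg_one_smul, sub_neg_eq_add]
  refine SetLike.lt_iff_le_and_exists.mpr ⟨fun v hv => ?_, y, ?_, fun hy => ?_⟩
  · rw [mem_fixedSpace, LinearIsometryEquiv.coe_mul, Function.comp_apply, mem_fixedSpace.mp hv,
      reflection_mem_subspace_eq_self (hle hv)]
  · rw [mem_fixedSpace, LinearIsometryEquiv.coe_mul, Function.comp_apply, ← hsy,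
      reflection_reflection]
  · rw [mem_fixedSpace, hwy, add_eq_left] at hy
    rw [hy, norm_zero] at hα
    exact zero_ne_one hα

theorem apply_eq_self_of_mem_closure {W : Subgroup (E ≃ₗᵢ[ℝ] E)} {S : Set W} {v : E}
    (hS : ∀ s ∈ S, (s : E ≃ₗᵢ[ℝ] E) v = v) {g : W} (hg : g ∈ Subgroup.closure S) :
    (g : E ≃ₗᵢ[ℝ] E) v = v := by
  induction hg using Subgroup.closure_induction with
  | mem s hs => exact hS s hs
  | one => rfl
  | mul a b _ _ ha hb =>
    rw [Subgroup.coe_mul, LinearIsometryEquiv.coe_mul, Function.comp_apply, hb, ha]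
  | inv a _ ha =>
    rw [Subgroup.coe_inv, LinearIsometryEquiv.coe_inv, LinearIsometryEquiv.symm_apply_eq, ha]

theorem finrank_le_length_of_forall_apply_eq_self (l : List (E ≃ₗᵢ[ℝ] E))
    (hl : ∀ t ∈ l, IsHypReflection t) (h : ∀ v, (∀ t ∈ l, t v = v) → v = 0) :
    Module.finrank ℝ E ≤ l.length := by
  classical
  choose! root hroot using fun t ht => (hl t ht).imp fun _ h => h.2
  have hspan : span ℝ ((l.map root).toFinset : Set E) = ⊤ := by
    rw [← Submodule.orthogonal_eq_bot_iff, eq_bot_iff]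
    refine fun v hv => (Submodule.mem_bot ℝ).mpr (h v fun t ht => ?_)
    rw [hroot t ht]
    exact reflection_orthogonal_singleton_apply_of_inner_eq_zero
      (hv _ (subset_span (by simpa using ⟨t, ht, rfl⟩)))
  calc Module.finrank ℝ E = Module.finrank ℝ (span ℝ ((l.map root).toFinset : Set E)) := by
        rw [hspan, finrank_top]
    _ ≤ (l.map root).toFinset.card := finrank_span_finset_le_card _
    _ ≤ l.length := (List.toFinset_card_le _).trans (List.length_map _).le

def rootSet (W : Subgroup (E ≃ₗᵢ[ℝ] E)) : Set E :=
  {α | ‖α‖ = 1 ∧ reflection (ℝ ∙ α)ᗮ ∈ W}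

theorem rootSet_finite (W : Subgroup (E ≃ₗᵢ[ℝ] E)) [Finite W] : (rootSet W).Finite := by
  have hcover : rootSet W ⊆
      ⋃ t ∈ (W : Set (E ≃ₗᵢ[ℝ] E)), {α | ‖α‖ = 1 ∧ reflection (ℝ ∙ α)ᗮ = t} :=
    fun α hα => Set.mem_biUnion hα.2 ⟨hα.1, rfl⟩
  refine ((W : Set (E ≃ₗᵢ[ℝ] E)).toFinite.biUnion fun t _ => ?_).subset hcover
  by_cases hne : ∃ α₀, ‖α₀‖ = 1 ∧ reflection (ℝ ∙ α₀)ᗮ = t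
  · obtain ⟨α₀, h₀, rfl⟩ := hne
    exact (Set.toFinite {α₀, -α₀}).subset fun β hβ =>
      eq_or_eq_neg_of_reflection_eq h₀ hβ.1 hβ.2.symm
  · exact Set.finite_empty.subset fun β hβ => hne ⟨β, hβ⟩

theorem isUnitRootSystem_rootSet (W : Subgroup (E ≃ₗᵢ[ℝ] E)) [Finite W] :
    IsUnitRootSystem (rootSet_finite W).toFinset where
  norm_eq_one _ hα := ((rootSet_finite W).mem_toFinset.mp hα).1
  reflection_mem α hα β hβ := by
    rw [Set.Finite.mem_toFinset] at hα hβ ⊢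
    refine ⟨by rw [LinearIsometryEquiv.norm_map, hβ.1], ?_⟩
    rw [← reflection_orthogonal_singleton_conj _ hβ.1]
    exact W.mul_mem (W.mul_mem hα.2 hβ.2) (W.inv_mem hα.2)

theorem mem_closure_reflection_rootSet (W : Subgroup (E ≃ₗᵢ[ℝ] E))
    (hgen : Subgroup.closure {x : W | IsHypReflection (x : E ≃ₗᵢ[ℝ] E)} = ⊤) (w : W) :
    (w : E ≃ₗᵢ[ℝ] E) ∈ Subgroup.closure ((fun α => reflection (ℝ ∙ α)ᗮ) '' rootSet W) := by
  have hw : (w : E ≃ₗᵢ[ℝ] E) ∈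
      (Subgroup.closure {x : W | IsHypReflection (x : E ≃ₗᵢ[ℝ] E)}).map W.subtype := by
    rw [hgen]
    exact ⟨w, Subgroup.mem_top w, rfl⟩
  rw [MonoidHom.map_closure] at hw
  refine Subgroup.closure_mono ?_ hw
  rintro _ ⟨t, ht, rfl⟩
  obtain ⟨α, hα, hαt⟩ := IsHypReflection.exists_norm_eq_one ht
  exact ⟨α, ⟨hα, hαt ▸ t.2⟩, hαt.symm⟩

theorem exists_mem_rootSet_fixedSpace_le (W : Subgroup (E ≃ₗᵢ[ℝ] E)) [Finite W]
    (hgen : Subgroup.closure {x : W | IsHypReflection (x : E ≃ₗᵢ[ℝ] E)} = ⊤) {w : W}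
    (hw : w ≠ 1) :
    ∃ α ∈ rootSet W, fixedSpace (w : E ≃ₗᵢ[ℝ] E) ≤ (ℝ ∙ α)ᗮ := by
  by_contra! h
  -- a fixed vector of `w` off all reflecting hyperplanes has trivial stabilizer
  obtain ⟨x, hxw, hx⟩ := exists_mem_forall_inner_ne_zero (fixedSpace (w : E ≃ₗᵢ[ℝ] E))
    (rootSet_finite W).toFinset fun α hα => h α ((rootSet_finite W).mem_toFinset.mp hα)
  refine hw (Subtype.ext ((isUnitRootSystem_rootSet W).eq_one_of_apply_eq_self hx ?_
    (mem_fixedSpace.mp hxw)))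
  rw [Set.Finite.coe_toFinset]
  exact mem_closure_reflection_rootSet W hgen w

theorem exists_reflection_word [FiniteDimensional ℝ E] (W : Subgroup (E ≃ₗᵢ[ℝ] E)) [Finite W]
    (hgen : Subgroup.closure {x : W | IsHypReflection (x : E ≃ₗᵢ[ℝ] E)} = ⊤) (w : W) :
    ∃ L : List W, (∀ t ∈ L, IsHypReflection (t : E ≃ₗᵢ[ℝ] E)) ∧ L.prod = w ∧
      L.length + Module.finrank ℝ (fixedSpace (w : E ≃ₗᵢ[ℝ] E)) ≤ Module.finrank ℝ E := by
  induction hn : Module.finrank ℝ E - Module.finrank ℝ (fixedSpace (w : E ≃ₗᵢ[ℝ] E))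
    using Nat.strong_induction_on generalizing w with
  | _ n ih =>
  by_cases hw : w = 1
  · subst hw
    exact ⟨[], by simp, rfl, by simpa using Submodule.finrank_le _⟩
  obtain ⟨α, ⟨hα, hαW⟩, hle⟩ := exists_mem_rootSet_fixedSpace_le W hgen hw
  let t : W := ⟨reflection (ℝ ∙ α)ᗮ, hαW⟩
  have ht : IsHypReflection (t : E ≃ₗᵢ[ℝ] E) := ⟨α, by rintro rfl; simp at hα, rfl⟩
  have hlt : Module.finrank ℝ (fixedSpace (w : E ≃ₗᵢ[ℝ] E)) <
      Module.finrank ℝ (fixedSpace ((t * w : W) : E ≃ₗᵢ[ℝ] E)) :=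
    Submodule.finrank_lt_finrank_of_lt (fixedSpace_lt_fixedSpace_reflection_mul _ hα hle)
  have htw := Submodule.finrank_le (fixedSpace ((t * w : W) : E ≃ₗᵢ[ℝ] E))
  obtain ⟨L, hLT, hLprod, hLlen⟩ := ih _ (by omega) (t * w) rfl
  refine ⟨t :: L, List.forall_mem_cons.mpr ⟨ht, hLT⟩, ?_, ?_⟩
  · rw [List.prod_cons, hLprod, ← mul_assoc,
      (Subtype.ext (reflection_mul_reflection _) : t * t = 1), one_mul]
  · rw [List.length_cons]
    omega

theorem wordLength_add_finrank_fixedSpace_le [FiniteDimensional ℝ E] (W : Subgroup (E ≃ₗᵢ[ℝ] E))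
    [Finite W]
    (hgen : Subgroup.closure {x : W | IsHypReflection (x : E ≃ₗᵢ[ℝ] E)} = ⊤) (w : W) :
    wordLength {x : W | IsHypReflection (x : E ≃ₗᵢ[ℝ] E)} w +
      Module.finrank ℝ (fixedSpace (w : E ≃ₗᵢ[ℝ] E)) ≤ Module.finrank ℝ E := by
  obtain ⟨L, hLT, hLprod, hlen⟩ := exists_reflection_word W hgen w
  have hword : wordLength {x : W | IsHypReflection (x : E ≃ₗᵢ[ℝ] E)} w ≤ L.length :=
    Nat.sInf_le ⟨L, hLT, rfl, hLprod⟩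
  omega

end

theorem quasiCoxeter_fixedSpace_eq_bot_general (W : Subgroup (V ≃ₗᵢ[ℝ] V)) [Finite W]
    (hgen : Subgroup.closure {x : W | IsHypReflection (x : V ≃ₗᵢ[ℝ] V)} = ⊤)
    (hess : ∀ v : V, (∀ g : W, (g : V ≃ₗᵢ[ℝ] V) v = v) → v = 0)
    (w : W) (l : List W)
    (hlT : ∀ t ∈ l, IsHypReflection (t : V ≃ₗᵢ[ℝ] V))
    (hlred : l.length = wordLength {x : W | IsHypReflection (x : V ≃ₗᵢ[ℝ] V)} w)
    (hquasi : Subgroup.closure {x | x ∈ l} = (⊤ : Subgroup W)) :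
    fixedSpace (w : V ≃ₗᵢ[ℝ] V) = ⊥ ∧
      wordLength {x : W | IsHypReflection (x : V ≃ₗᵢ[ℝ] V)} w = Module.finrank ℝ V := by
  have hlen : Module.finrank ℝ V ≤ l.length := by
    simpa using finrank_le_length_of_forall_apply_eq_self (l.map (↑)) (by simpa using hlT)
      fun v hv => hess v fun g => apply_eq_self_of_mem_closure (by simpa using hv)
        (hquasi ▸ Subgroup.mem_top g)
  have hcodim := wordLength_add_finrank_fixedSpace_le W hgen w
  have hfix : Module.finrank ℝ (fixedSpace (w : V ≃ₗᵢ[ℝ] V)) = 0 := by omega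
  exact ⟨Submodule.finrank_eq_zero.mp hfix, by omega⟩

/-- Let `W` be a finite real reflection group acting essentially on `V`, and let `w ∈ W`
be a quasi-Coxeter element, i.e. some `T`-reduced expression of `w` generates `W`. Then
`w` has no nonzero fixed vector in `V`: `V^w = 0`, equivalently `ℓ_T(w) = dim V`. -/
theorem quasiCoxeter_fixedSpace_eq_bot (W : Subgroup (V ≃ₗᵢ[ℝ] V)) [Finite W]
    (hgen : Subgroup.closure {x : W | IsHypReflection (x : V ≃ₗᵢ[ℝ] V)} = ⊤)
    (hess : ∀ v : V, (∀ g : W, (g : V ≃ₗᵢ[ℝ] V) v = v) → v = 0)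
    (w : W) (l : List W)
    (hlT : ∀ t ∈ l, IsHypReflection (t : V ≃ₗᵢ[ℝ] V))
    (hlprod : l.prod = w)
    (hlred : l.length = wordLength {x : W | IsHypReflection (x : V ≃ₗᵢ[ℝ] V)} w)
    (hquasi : Subgroup.closure {x | x ∈ l} = (⊤ : Subgroup W)) :
    fixedSpace (w : V ≃ₗᵢ[ℝ] V) = ⊥ ∧
      wordLength {x : W | IsHypReflection (x : V ≃ₗᵢ[ℝ] V)} w = Module.finrank ℝ V :=
  quasiCoxeter_fixedSpace_eq_bot_general W hgen hess w l hlT hlred hquasi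
end
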